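/- Let r ≥ 2 and t ≥ 1. Let M₁ be a symmetric real (r-1)×(r-1) matrix, L a real (r-1)×1 matrix, and set M := [[M₁, (1/2)L],[(1/2)Lᵀ, 1]] (an r×r matrix) and 𝔐 := 4M₁ - LLᵀ; assume M and 𝔐 are invertible. Let N₂ be a symmetric real t×t matrix, R₂₁ a real t×(r-1) matrix, R₂₂ a real t×1 matrix, and R₂ := [R₂₁ | R₂₂] the t×r matrix obtained by juxtaposition. Set N₂' := 4N₂ - R₂₂R₂₂ᵀ and R₂' := 4R₂₁ - 2R₂₂Lᵀ. Then 4N₂' - R₂'𝔐⁻¹R₂'ᵀ = 4·(4N₂ - R₂M⁻¹R₂ᵀ). -/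

import Mathlib

/-! The Schur complement of the bottom-right `1` in `M` is `M₁ - (1/4) L Lᵀ = (1/4) 𝔐`, so
block inversion gives `R₂ M⁻¹ R₂ᵀ = R₂₂ R₂₂ᵀ + (R₂₁ - (1/2) R₂₂ Lᵀ) (4 𝔐⁻¹) (R₂₁ - (1/2) R₂₂ Lᵀ)ᵀ`,
and `R₂₁ - (1/2) R₂₂ Lᵀ = (1/4) R₂'`. -/

open Matrix

namespace Matrix

variable {l m n k α : Type*} [Fintype m] [Fintype n] [DecidableEq m] [DecidableEq n] [CommRing α]

theorem fromCols_mul_inv_fromBlocks_mul_fromRows {A : Matrix m m α} {B : Matrix m n α}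
    {C : Matrix n m α} {D : Matrix n n α} (hD : IsUnit D.det) (hS : IsUnit (A - B * D⁻¹ * C).det)
    (X : Matrix l m α) (Y : Matrix l n α) (U : Matrix m k α) (V : Matrix n k α) :
    fromCols X Y * (fromBlocks A B C D)⁻¹ * fromRows U V =
      (X - Y * D⁻¹ * C) * (A - B * D⁻¹ * C)⁻¹ * (U - B * D⁻¹ * V) + Y * D⁻¹ * V := by
  let := invertibleOfIsUnitDet D hD
  rw [← invOf_eq_nonsing_inv D] at hS ⊢
  let := invertibleOfIsUnitDet _ hS
  let := fromBlocks₂₂Invertible A B C D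
  rw [← invOf_eq_nonsing_inv, ← invOf_eq_nonsing_inv (A - B * ⅟D * C), invOf_fromBlocks₂₂_eq,
    fromCols_mul_fromBlocks, fromCols_mul_fromRows]
  simp only [Matrix.mul_add, Matrix.add_mul, Matrix.mul_sub, Matrix.sub_mul, Matrix.mul_neg,
    Matrix.neg_mul, Matrix.mul_assoc]
  abel

theorem fromCols_mul_inv_fromBlocks_one_mul_fromRows {A : Matrix m m α} {B : Matrix m n α}
    {C : Matrix n m α} (hS : IsUnit (A - B * C).det)
    (X : Matrix l m α) (Y : Matrix l n α) (U : Matrix m k α) (V : Matrix n k α) :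
    fromCols X Y * (fromBlocks A B C 1)⁻¹ * fromRows U V =
      (X - Y * C) * (A - B * C)⁻¹ * (U - B * V) + Y * V := by
  have hS' : IsUnit (A - B * (1 : Matrix n n α)⁻¹ * C).det := by
    rwa [inv_one, Matrix.mul_one]
  simpa only [inv_one, Matrix.mul_one] using
    fromCols_mul_inv_fromBlocks_mul_fromRows (by simp) hS' X Y U V

end Matrix

theorem schur_invariant_half_integral_correspondence_general {t r : ℕ}
    (M₁ : Matrix (Fin (r-1)) (Fin (r-1)) ℝ)
    (L : Matrix (Fin (r-1)) (Fin 1) ℝ)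
    (N₂ : Matrix (Fin t) (Fin t) ℝ)
    (R₂₁ : Matrix (Fin t) (Fin (r-1)) ℝ) (R₂₂ : Matrix (Fin t) (Fin 1) ℝ)
    (h𝔐det : IsUnit ((4 : ℝ) • M₁ - L * Lᵀ).det) :
    (4 : ℝ) • ((4 : ℝ) • N₂ - R₂₂ * R₂₂ᵀ) -
        ((4 : ℝ) • R₂₁ - (2 : ℝ) • (R₂₂ * Lᵀ)) * ((4 : ℝ) • M₁ - L * Lᵀ)⁻¹ *
          ((4 : ℝ) • R₂₁ - (2 : ℝ) • (R₂₂ * Lᵀ))ᵀ =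
      (4 : ℝ) • ((4 : ℝ) • N₂ -
        fromCols R₂₁ R₂₂ *
          (fromBlocks M₁ ((1/2 : ℝ) • L) ((1/2 : ℝ) • Lᵀ) (1 : Matrix (Fin 1) (Fin 1) ℝ))⁻¹ *
          (fromCols R₂₁ R₂₂)ᵀ) := by
  set 𝔐 := (4 : ℝ) • M₁ - L * Lᵀ
  have hS : M₁ - (1/2 : ℝ) • L * ((1/2 : ℝ) • Lᵀ) = (4 : ℝ)⁻¹ • 𝔐 := by
    simp only [Matrix.smul_mul, Matrix.mul_smul, 𝔐]
    module
  have hSdet : IsUnit ((4 : ℝ)⁻¹ • 𝔐).det := by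
    rw [det_smul]
    exact (IsUnit.pow _ (by norm_num)).mul h𝔐det
  have hSinv : ((4 : ℝ)⁻¹ • 𝔐)⁻¹ = (4 : ℝ) • 𝔐⁻¹ :=
    inv_eq_left_inv (by rw [Matrix.smul_mul, Matrix.mul_smul, smul_smul,
      nonsing_inv_mul _ h𝔐det]; norm_num)
  rw [transpose_fromCols, fromCols_mul_inv_fromBlocks_one_mul_fromRows (hS ▸ hSdet), hS, hSinv]
  simp only [Matrix.transpose_sub, Matrix.transpose_smul, Matrix.transpose_mul,
    Matrix.transpose_transpose, Matrix.smul_mul, Matrix.mul_smul, Matrix.sub_mul, Matrix.mul_sub,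
    Matrix.mul_assoc]
  module

/-- the Schur-complement identity relating index `M = [[M₁,(1/2)L],[(1/2)Lᵀ,1]]`
to the index `𝔐 = 4M₁ - LLᵀ`:
`4N₂' - R₂'𝔐⁻¹R₂'ᵀ = 4·(4N₂ - R₂M⁻¹R₂ᵀ)` where `N₂' = 4N₂ - R₂₂R₂₂ᵀ` and
`R₂' = 4R₂₁ - 2R₂₂Lᵀ`, `R₂ = [R₂₁ | R₂₂]`. -/
theorem schur_invariant_half_integral_correspondence {t r : ℕ} (hr : 2 ≤ r) (ht : 1 ≤ t)
    (M₁ : Matrix (Fin (r-1)) (Fin (r-1)) ℝ) (hM₁ : M₁.IsSymm)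
    (L : Matrix (Fin (r-1)) (Fin 1) ℝ)
    (N₂ : Matrix (Fin t) (Fin t) ℝ) (hN₂ : N₂.IsSymm)
    (R₂₁ : Matrix (Fin t) (Fin (r-1)) ℝ) (R₂₂ : Matrix (Fin t) (Fin 1) ℝ)
    (hMdet : IsUnit (fromBlocks M₁ ((1/2 : ℝ) • L) ((1/2 : ℝ) • Lᵀ)
      (1 : Matrix (Fin 1) (Fin 1) ℝ)).det)
    (h𝔐det : IsUnit ((4 : ℝ) • M₁ - L * Lᵀ).det) :
    (4 : ℝ) • ((4 : ℝ) • N₂ - R₂₂ * R₂₂ᵀ) -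
        ((4 : ℝ) • R₂₁ - (2 : ℝ) • (R₂₂ * Lᵀ)) * ((4 : ℝ) • M₁ - L * Lᵀ)⁻¹ *
          ((4 : ℝ) • R₂₁ - (2 : ℝ) • (R₂₂ * Lᵀ))ᵀ =
      (4 : ℝ) • ((4 : ℝ) • N₂ -
        fromCols R₂₁ R₂₂ *
          (fromBlocks M₁ ((1/2 : ℝ) • L) ((1/2 : ℝ) • Lᵀ) (1 : Matrix (Fin 1) (Fin 1) ℝ))⁻¹ *
          (fromCols R₂₁ R₂₂)ᵀ) :=
  schur_invariant_half_integral_correspondence_general M₁ L N₂ R₂₁ R₂₂ h𝔐det
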